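/- Let φ be a conformal immersion on an open set U ⊆ ℝ² with conformal factor λ, with unit normal n := (φ_u × φ_v)/‖φ_u × φ_v‖ and μ := (∂_z φ_z, n). Then the first structure (Gauss) equation holds at every point of U: ∂_z φ_z = (2 ∂_z λ / λ) φ_z + μ n. -/

import Mathlib

open Complex

noncomputable section

/-- Euclidean 3-space. -/
abbrev E3 : Type := EuclideanSpace ℝ (Fin 3)

/-- Partial derivative in the first (u) coordinate direction. -/
def pu {F : Type} [NormedAddCommGroup F] [NormedSpace ℝ F]
    (f : ℝ × ℝ → F) (p : ℝ × ℝ) : F := fderiv ℝ f p (1, 0)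

/-- Partial derivative in the second (v) coordinate direction. -/
def pv {F : Type} [NormedAddCommGroup F] [NormedSpace ℝ F]
    (f : ℝ × ℝ → F) (p : ℝ × ℝ) : F := fderiv ℝ f p (0, 1)

/-- Cross product on ℝ³. -/
def cross (a b : E3) : E3 :=
  (WithLp.equiv 2 (Fin 3 → ℝ)).symm
    ![a 1 * b 2 - a 2 * b 1, a 2 * b 0 - a 0 * b 2, a 0 * b 1 - a 1 * b 0]

/-- The Euclidean inner product on ℝ³. -/
def ip (a b : E3) : ℝ := @inner ℝ _ _ a b

/-- `φ` is a smooth conformal immersion on the open set `U ⊆ ℝ²` with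
(smooth, positive) conformal factor `lam`:  ⟨φ_u,φ_u⟩ = λ², ⟨φ_v,φ_v⟩ = λ²,
⟨φ_u,φ_v⟩ = 0 at every point of `U`. -/
def IsConfImm (U : Set (ℝ × ℝ)) (φ : ℝ × ℝ → E3) (lam : ℝ × ℝ → ℝ) : Prop :=
  IsOpen U ∧ ContDiffOn ℝ (⊤ : ℕ∞) φ U ∧ ContDiffOn ℝ (⊤ : ℕ∞) lam U ∧
    ∀ p ∈ U, 0 < lam p ∧
      ip (pu φ p) (pu φ p) = (lam p) ^ 2 ∧
      ip (pv φ p) (pv φ p) = (lam p) ^ 2 ∧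
      ip (pu φ p) (pv φ p) = 0

/-- Complexification ℝ³ ↪ ℂ³. -/
def toC (x : E3) : Fin 3 → ℂ := fun j => (x j : ℂ)

/-- Complex-bilinear dot product on ℂ³:  (a,b) = Σⱼ aⱼ bⱼ. -/
def cdot (a b : Fin 3 → ℂ) : ℂ := ∑ j, a j * b j

/-- ∂_z = ½(∂_u − i ∂_v) for maps into complex normed spaces. -/
def dz {F : Type} [NormedAddCommGroup F] [NormedSpace ℂ F]
    (f : ℝ × ℝ → F) (p : ℝ × ℝ) : F :=
  (2 : ℂ)⁻¹ • (pu f p - Complex.I • pv f p)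

/-- ∂_z̄ = ½(∂_u + i ∂_v) for maps into complex normed spaces. -/
def dzbar {F : Type} [NormedAddCommGroup F] [NormedSpace ℂ F]
    (f : ℝ × ℝ → F) (p : ℝ × ℝ) : F :=
  (2 : ℂ)⁻¹ • (pu f p + Complex.I • pv f p)

/-- `f_z := ½(f_u − i f_v) ∈ ℂ³` for a real-vector-valued map `f` (in particular `φ_z`). -/
def phiz (f : ℝ × ℝ → E3) (p : ℝ × ℝ) : Fin 3 → ℂ :=
  (2 : ℂ)⁻¹ • (toC (pu f p) - Complex.I • toC (pv f p))

/-- `f_z̄ := ½(f_u + i f_v) ∈ ℂ³` for a real-vector-valued map `f` (in particular `φ_z̄`). -/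
def phizbar (f : ℝ × ℝ → E3) (p : ℝ × ℝ) : Fin 3 → ℂ :=
  (2 : ℂ)⁻¹ • (toC (pu f p) + Complex.I • toC (pv f p))

/-- The unit normal n = (φ_u × φ_v)/‖φ_u × φ_v‖. -/
def nvec (φ : ℝ × ℝ → E3) (p : ℝ × ℝ) : E3 :=
  ‖cross (pu φ p) (pv φ p)‖⁻¹ • cross (pu φ p) (pv φ p)

/-- Componentwise Laplacian Δ = ∂_uu + ∂_vv. -/
def lap {F : Type} [NormedAddCommGroup F] [NormedSpace ℝ F]
    (f : ℝ × ℝ → F) (p : ℝ × ℝ) : F := pu (pu f) p + pv (pv f) p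

/-- Mean curvature H = ⟨Δφ, n⟩/(2λ²). -/
def mcurv (φ : ℝ × ℝ → E3) (lam : ℝ × ℝ → ℝ) (p : ℝ × ℝ) : ℝ :=
  ip (lap φ p) (nvec φ p) / (2 * (lam p) ^ 2)

/-- μ := (∂_z φ_z, n). -/
def muQ (φ : ℝ × ℝ → E3) (p : ℝ × ℝ) : ℂ :=
  cdot (dz (phiz φ) p) (toC (nvec φ p))

/-! The complexified vectors `φ_u`, `φ_v`, `n` form an orthogonal frame of `ℂ³` for the bilinear
dot product, so `∂_z φ_z` is determined by its pairings with them; the pairing with `n` is `μ` by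
definition. Since `∂_z φ_z = ¼ (φ_uu - φ_vv - 2i φ_uv)`, differentiating the conformality relations
`⟨φ_u, φ_u⟩ = ⟨φ_v, φ_v⟩ = λ²`, `⟨φ_u, φ_v⟩ = 0` gives `(∂_z φ_z, φ_u) = λ λ_z` and
`(∂_z φ_z, φ_v) = -i λ λ_z`, which are the pairings of `(2 λ_z / λ) φ_z` with `φ_u` and `φ_v`. -/

open Filter Topology
open scoped RealInnerProductSpace

lemma ip_eq_sum (x y : E3) : ip x y = x 0 * y 0 + x 1 * y 1 + x 2 * y 2 := by
  simp [ip, PiLp.inner_apply, Fin.sum_univ_three, mul_comm]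

lemma cdot_eq_sum (v w : Fin 3 → ℂ) : cdot v w = v 0 * w 0 + v 1 * w 1 + v 2 * w 2 := by
  simp [cdot, Fin.sum_univ_three]

@[simp] lemma cross_apply_zero (a b : E3) : cross a b 0 = a 1 * b 2 - a 2 * b 1 := rfl
@[simp] lemma cross_apply_one (a b : E3) : cross a b 1 = a 2 * b 0 - a 0 * b 2 := rfl
@[simp] lemma cross_apply_two (a b : E3) : cross a b 2 = a 0 * b 1 - a 1 * b 0 := rfl

lemma ip_cross_self (a b : E3) : ip (cross a b) (cross a b) = ip a a * ip b b - ip a b ^ 2 := by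
  simp only [ip_eq_sum, cross_apply_zero, cross_apply_one, cross_apply_two]; ring

lemma ip_comm (x y : E3) : ip x y = ip y x := real_inner_comm y x

lemma ip_self_eq_zero {x : E3} : ip x x = 0 ↔ x = 0 := inner_self_eq_zero

lemma norm_sq_eq_ip (x : E3) : ‖x‖ ^ 2 = ip x x := (real_inner_self_eq_norm_sq x).symm

lemma toC_smul (r : ℝ) (x : E3) : toC (r • x) = (r : ℂ) • toC x := by
  ext j; simp [toC]

lemma cdot_toC_toC (x y : E3) : cdot (toC x) (toC y) = ip x y := by
  simp only [cdot_eq_sum, toC, ip_eq_sum]; push_cast; ring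

lemma cdot_sub_left (u v w : Fin 3 → ℂ) : cdot (u - v) w = cdot u w - cdot v w :=
  sub_dotProduct u v w

lemma cdot_smul_left (c : ℂ) (v w : Fin 3 → ℂ) : cdot (c • v) w = c * cdot v w :=
  smul_dotProduct c v w

lemma cdot_smul_right (c : ℂ) (v w : Fin 3 → ℂ) : cdot v (c • w) = c * cdot v w :=
  dotProduct_smul c v w

lemma smul_eq_cdot_frame_sum (a b : E3) (hab : ip a b = 0) (v : Fin 3 → ℂ) :
    ((ip a a * ip b b : ℝ) : ℂ) • v
      = ((ip b b : ℂ) * cdot v (toC a)) • toC a + ((ip a a : ℂ) * cdot v (toC b)) • toC b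
        + cdot v (toC (cross a b)) • toC (cross a b) := by
  have habC : ((ip a b : ℝ) : ℂ) = 0 := by exact_mod_cast hab
  set s : ℂ := (a 0 : ℂ) * b 0 + a 1 * b 1 + a 2 * b 2
  set va : ℂ := v 0 * a 0 + v 1 * a 1 + v 2 * a 2
  set vb : ℂ := v 0 * b 0 + v 1 * b 1 + v 2 * b 2
  ext j
  -- for arbitrary `a, b` the two sides differ by `⟪a, b⟫ (⟪a, b⟫ v - (v, b) a - (v, a) b)`
  fin_cases j <;>
    simp only [ip_eq_sum, cdot_eq_sum, toC, Fin.isValue, Fin.zero_eta, Fin.mk_one, Fin.reduceFinMk,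
      ofReal_add, ofReal_mul, ofReal_sub, Pi.smul_apply, Pi.add_apply, smul_eq_mul,
      cross_apply_zero, cross_apply_one, cross_apply_two] at habC ⊢
  · linear_combination (s * v 0 - vb * a 0 - va * b 0) * habC
  · linear_combination (s * v 1 - vb * a 1 - va * b 1) * habC
  · linear_combination (s * v 2 - vb * a 2 - va * b 2) * habC

lemma eq_cdot_frame_sum {a b : E3} (hab : ip a b = 0) (ha : a ≠ 0) (hb : b ≠ 0)
    (v : Fin 3 → ℂ) :
    v = (cdot v (toC a) / ip a a) • toC a + (cdot v (toC b) / ip b b) • toC b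
      + cdot v (toC (‖cross a b‖⁻¹ • cross a b)) • toC (‖cross a b‖⁻¹ • cross a b) := by
  have haa : (ip a a : ℂ) ≠ 0 := by exact_mod_cast mt ip_self_eq_zero.1 ha
  have hbb : (ip b b : ℂ) ≠ 0 := by exact_mod_cast mt ip_self_eq_zero.1 hb
  have hc : ((‖cross a b‖ : ℝ) : ℂ) ^ 2 = ip a a * ip b b := by
    rw [← ofReal_pow, norm_sq_eq_ip, ip_cross_self, hab]; push_cast; ring
  have hP : ((ip a a * ip b b : ℝ) : ℂ) ≠ 0 := by push_cast; exact mul_ne_zero haa hbb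
  calc v = ((ip a a * ip b b : ℝ) : ℂ)⁻¹ • (((ip a a * ip b b : ℝ) : ℂ) • v) := by
        rw [smul_smul, inv_mul_cancel₀ hP, one_smul]
    _ = _ := by
      rw [smul_eq_cdot_frame_sum a b hab, toC_smul, cdot_smul_right]
      match_scalars <;> field_simp
      rw [hc]
      field_simp

section InnerDeriv

variable {E F : Type*} [NormedAddCommGroup E] [NormedSpace ℝ E]
  [NormedAddCommGroup F] [InnerProductSpace ℝ F]

lemma HasFDerivAt.inner_add_inner_of_eventuallyEq {f g : E → F} {h : E → ℝ}
    {f' g' : E →L[ℝ] F} {h' : E →L[ℝ] ℝ} {p : E} (hf : HasFDerivAt f f' p)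
    (hg : HasFDerivAt g g' p) (hh : HasFDerivAt h h' p)
    (hfg : (fun q => ⟪f q, g q⟫) =ᶠ[𝓝 p] h) (w : E) :
    ⟪f' w, g p⟫ + ⟪f p, g' w⟫ = h' w := by
  have := ((hf.inner ℝ hg).congr_of_eventuallyEq hfg.symm).unique hh
  rw [← this]
  simp [fderivInnerCLM_apply, add_comm]

lemma HasFDerivAt.inner_self_of_eventuallyEq_sq {g : E → F} {l : E → ℝ}
    {g' : E →L[ℝ] F} {p : E} (hg : HasFDerivAt g g' p) (hl : DifferentiableAt ℝ l p)
    (hgl : (fun q => ⟪g q, g q⟫) =ᶠ[𝓝 p] fun q => l q ^ 2) (w : E) :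
    ⟪g' w, g p⟫ = l p * fderiv ℝ l p w := by
  have := hg.inner_add_inner_of_eventuallyEq hg (hl.hasFDerivAt.pow 2) hgl w
  simp only [Nat.add_one_sub_one, pow_one, nsmul_eq_mul, Nat.cast_ofNat, smul_apply,
    smul_eq_mul] at this
  linarith [real_inner_comm (g p) (g' w)]

end InnerDeriv

section SecondDeriv

variable {E F : Type*} [NormedAddCommGroup E] [NormedSpace ℝ E]
  [NormedAddCommGroup F] [NormedSpace ℝ F] {f : E → F} {p : E}

lemma ContDiffAt.differentiableAt_fderiv_apply (hf : ContDiffAt ℝ 2 f p) (w : E) :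
    DifferentiableAt ℝ (fun q => fderiv ℝ f q w) p :=
  ((hf.fderiv_right (m := 1) le_rfl).differentiableAt one_ne_zero).clm_apply
    (differentiableAt_const w)

lemma ContDiffAt.fderiv_fderiv_apply_comm (hf : ContDiffAt ℝ 2 f p) (v w : E) :
    fderiv ℝ (fun q => fderiv ℝ f q w) p v = fderiv ℝ (fun q => fderiv ℝ f q v) p w := by
  have hd := (hf.fderiv_right (m := 1) le_rfl).differentiableAt one_ne_zero
  rw [fderiv_clm_apply hd (differentiableAt_const _),
    fderiv_clm_apply hd (differentiableAt_const _)]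
  simp only [fderiv_fun_const, Pi.zero_apply, ContinuousLinearMap.comp_zero, zero_add,
    ContinuousLinearMap.flip_apply]
  exact hf.isSymmSndFDerivAt (by simp) v w

end SecondDeriv

def toCL : E3 →L[ℝ] (Fin 3 → ℂ) :=
  ContinuousLinearMap.pi fun j => ofRealCLM.comp (EuclideanSpace.proj j)

section ComplexDeriv

variable {φ : ℝ × ℝ → E3} {p : ℝ × ℝ}

lemma fderiv_phiz_apply (hu : DifferentiableAt ℝ (pu φ) p) (hv : DifferentiableAt ℝ (pv φ) p)
    (w : ℝ × ℝ) :
    fderiv ℝ (phiz φ) p w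
      = (2 : ℂ)⁻¹ • (toC (fderiv ℝ (pu φ) p w) - I • toC (fderiv ℝ (pv φ) p w)) := by
  have h : HasFDerivAt (phiz φ) _ p := ((toCL.hasFDerivAt.comp p hu.hasFDerivAt).sub
    ((toCL.hasFDerivAt.comp p hv.hasFDerivAt).const_smul I)).const_smul (2 : ℂ)⁻¹
  rw [h.fderiv]
  rfl

lemma dz_phiz (hφ : ContDiffAt ℝ 2 φ p) :
    dz (phiz φ) p = (4 : ℂ)⁻¹ • (toC (pu (pu φ) p) - toC (pv (pv φ) p)
      - (2 * I) • toC (pu (pv φ) p)) := by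
  have hsymm : pv (pu φ) p = pu (pv φ) p := hφ.fderiv_fderiv_apply_comm _ _
  have hu := hφ.differentiableAt_fderiv_apply (1, 0)
  have hv := hφ.differentiableAt_fderiv_apply (0, 1)
  rw [dz, pu, pv, fderiv_phiz_apply hu hv, fderiv_phiz_apply hu hv]
  change (2 : ℂ)⁻¹ • ((2 : ℂ)⁻¹ • (toC (pu (pu φ) p) - I • toC (pu (pv φ) p))
    - I • (2 : ℂ)⁻¹ • (toC (pv (pu φ) p) - I • toC (pv (pv φ) p))) = _
  rw [hsymm]
  match_scalars <;> ring_nf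
  simp only [I_sq]
  ring

lemma dz_ofReal {f : ℝ × ℝ → ℝ} (hf : DifferentiableAt ℝ f p) :
    dz (fun q => (f q : ℂ)) p = (((pu f p : ℝ) : ℂ) - I * (pv f p : ℝ)) / 2 := by
  have h : HasFDerivAt (fun q => (f q : ℂ)) _ p := ofRealCLM.hasFDerivAt.comp p hf.hasFDerivAt
  rw [dz, pu, pv, h.fderiv]
  simp [div_eq_inv_mul, pu, pv]

end ComplexDeriv

lemma cdot_dz_phiz_toC {φ : ℝ × ℝ → E3} {p : ℝ × ℝ} (hφ : ContDiffAt ℝ 2 φ p) (x : E3) :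
    cdot (dz (phiz φ) p) (toC x)
      = ((ip (pu (pu φ) p) x - ip (pv (pv φ) p) x : ℝ) - 2 * I * ip (pu (pv φ) p) x) / 4 := by
  rw [dz_phiz hφ]
  simp only [cdot_smul_left, cdot_sub_left, cdot_toC_toC]
  push_cast
  ring

namespace IsConfImm

variable {U : Set (ℝ × ℝ)} {φ : ℝ × ℝ → E3} {lam : ℝ × ℝ → ℝ} (h : IsConfImm U φ lam)
  {p : ℝ × ℝ} (hp : p ∈ U)
include h hp

lemma contDiffAt : ContDiffAt ℝ 2 φ p :=
  (h.2.1.contDiffAt (h.1.mem_nhds hp)).of_le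
    (WithTop.coe_le_coe.2 le_top : ((2 : ℕ∞) : WithTop ℕ∞) ≤ _)

lemma differentiableAt_lam : DifferentiableAt ℝ lam p :=
  (h.2.2.1.contDiffAt (h.1.mem_nhds hp)).differentiableAt (by simp)

lemma pu_ne_zero : pu φ p ≠ 0 := by
  refine mt ip_self_eq_zero.2 ?_
  rw [(h.2.2.2 p hp).2.1]
  exact (pow_pos (h.2.2.2 p hp).1 2).ne'

lemma pv_ne_zero : pv φ p ≠ 0 := by
  refine mt ip_self_eq_zero.2 ?_
  rw [(h.2.2.2 p hp).2.2.1]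
  exact (pow_pos (h.2.2.2 p hp).1 2).ne'

lemma inner_fderiv_pu_pu (w : ℝ × ℝ) :
    ip (fderiv ℝ (pu φ) p w) (pu φ p) = lam p * fderiv ℝ lam p w :=
  ((h.contDiffAt hp).differentiableAt_fderiv_apply (1, 0)).hasFDerivAt
    |>.inner_self_of_eventuallyEq_sq (h.differentiableAt_lam hp)
    (eventually_of_mem (h.1.mem_nhds hp) fun q hq => (h.2.2.2 q hq).2.1) w

lemma inner_fderiv_pv_pv (w : ℝ × ℝ) :
    ip (fderiv ℝ (pv φ) p w) (pv φ p) = lam p * fderiv ℝ lam p w :=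
  ((h.contDiffAt hp).differentiableAt_fderiv_apply (0, 1)).hasFDerivAt
    |>.inner_self_of_eventuallyEq_sq (h.differentiableAt_lam hp)
    (eventually_of_mem (h.1.mem_nhds hp) fun q hq => (h.2.2.2 q hq).2.2.1) w

lemma inner_fderiv_pu_pv_add (w : ℝ × ℝ) :
    ip (fderiv ℝ (pu φ) p w) (pv φ p) + ip (pu φ p) (fderiv ℝ (pv φ) p w) = 0 :=
  ((h.contDiffAt hp).differentiableAt_fderiv_apply (1, 0)).hasFDerivAt
    |>.inner_add_inner_of_eventuallyEq
      ((h.contDiffAt hp).differentiableAt_fderiv_apply (0, 1)).hasFDerivAt (hasFDerivAt_const 0 p)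
    (eventually_of_mem (h.1.mem_nhds hp) fun q hq => (h.2.2.2 q hq).2.2.2) w

lemma cdot_dz_phiz_pu :
    cdot (dz (phiz φ) p) (toC (pu φ p)) = lam p * dz (fun q => (lam q : ℂ)) p := by
  have hsymm : pv (pu φ) p = pu (pv φ) p := (h.contDiffAt hp).fderiv_fderiv_apply_comm _ _
  have hAa : ip (pu (pu φ) p) (pu φ p) = lam p * pu lam p := h.inner_fderiv_pu_pu hp _
  have hBa : ip (pu (pv φ) p) (pu φ p) = lam p * pv lam p := hsymm ▸ h.inner_fderiv_pu_pu hp _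
  have hBb : ip (pu (pv φ) p) (pv φ p) = lam p * pu lam p := h.inner_fderiv_pv_pv hp _
  have hCa : ip (pv (pv φ) p) (pu φ p) = -(lam p * pu lam p) := by
    have h1 : ip (pv (pu φ) p) (pv φ p) + ip (pu φ p) (pv (pv φ) p) = 0 :=
      h.inner_fderiv_pu_pv_add hp _
    rw [hsymm, hBb, ip_comm] at h1
    linarith
  rw [cdot_dz_phiz_toC (h.contDiffAt hp), hAa, hBa, hCa, dz_ofReal (h.differentiableAt_lam hp)]
  push_cast
  ring

lemma cdot_dz_phiz_pv :
    cdot (dz (phiz φ) p) (toC (pv φ p)) = -I * lam p * dz (fun q => (lam q : ℂ)) p := by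
  have hsymm : pv (pu φ) p = pu (pv φ) p := (h.contDiffAt hp).fderiv_fderiv_apply_comm _ _
  have hBa : ip (pu (pv φ) p) (pu φ p) = lam p * pv lam p := hsymm ▸ h.inner_fderiv_pu_pu hp _
  have hBb : ip (pu (pv φ) p) (pv φ p) = lam p * pu lam p := h.inner_fderiv_pv_pv hp _
  have hCb : ip (pv (pv φ) p) (pv φ p) = lam p * pv lam p := h.inner_fderiv_pv_pv hp _
  have hAb : ip (pu (pu φ) p) (pv φ p) = -(lam p * pv lam p) := by
    have h1 : ip (pu (pu φ) p) (pv φ p) + ip (pu φ p) (pu (pv φ) p) = 0 :=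
      h.inner_fderiv_pu_pv_add hp _
    rw [ip_comm (pu φ p), hBa] at h1
    linarith
  rw [cdot_dz_phiz_toC (h.contDiffAt hp), hAb, hBb, hCb, dz_ofReal (h.differentiableAt_lam hp)]
  push_cast
  ring_nf
  simp only [I_sq]
  ring

end IsConfImm

/-- first structure / Gauss equation:
∂_z φ_z = (2 λ_z / λ) φ_z + μ n. -/
theorem conformal_first_structure_equation
    (U : Set (ℝ × ℝ)) (φ : ℝ × ℝ → E3) (lam : ℝ × ℝ → ℝ)
    (h : IsConfImm U φ lam) :
    ∀ p ∈ U,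
      dz (phiz φ) p
        = (2 * dz (fun q => (lam q : ℂ)) p / (lam p : ℂ)) • phiz φ p
          + muQ φ p • toC (nvec φ p) := by
  intro p hp
  obtain ⟨hL, haa, hbb, hab⟩ := h.2.2.2 p hp
  have hL' : (lam p : ℂ) ≠ 0 := by exact_mod_cast hL.ne'
  calc dz (phiz φ) p
      = (cdot (dz (phiz φ) p) (toC (pu φ p)) / ip (pu φ p) (pu φ p)) • toC (pu φ p)
        + (cdot (dz (phiz φ) p) (toC (pv φ p)) / ip (pv φ p) (pv φ p)) • toC (pv φ p)
        + muQ φ p • toC (nvec φ p) :=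
      eq_cdot_frame_sum hab (h.pu_ne_zero hp) (h.pv_ne_zero hp) _
    _ = _ := by
      rw [h.cdot_dz_phiz_pu hp, h.cdot_dz_phiz_pv hp, haa, hbb, phiz]
      match_scalars <;> field_simp
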